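/- Let μ be a Borel probability measure on ℝ, let Ψ : ℝ → ℝ be a C¹ odd function that is increasing and concave on [0,∞) (so Ψ(0) = 0), and fix δ > 0 and x ∈ ℝ. Let f, g : ℝ → ℝ be Borel measurable functions such that: (a) (f(x) − f(z))·(g(x) − g(z)) ≥ 0 for μ-a.e. z; (b) μ({z : |g(x) − g(z)| < δ}) ≤ δ; and (c) the function z ↦ |(f(x) − g(x)) − (f(z) − g(z))|² is μ-integrable. Then ∫ |Ψ(f(x) − f(z)) − Ψ(g(x) − g(z))|² dμ(z) ≤ (Ψ(δ)/δ)²·∫ |(f(x) − g(x)) − (f(z) − g(z))|² dμ(z) + Ψ(δ)²·δ. -/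

import Mathlib

open MeasureTheory

lemma slope_aux {Ψ : ℝ → ℝ} (hconc : ConcaveOn ℝ (Set.Ici (0:ℝ)) Ψ)
    (hΨ0 : Ψ 0 = 0) {δ s t : ℝ} (hδ : 0 < δ) (hs : 0 ≤ s) (hst : s ≤ t)
    (hδt : δ ≤ t) : Ψ t - Ψ s ≤ (Ψ δ / δ) * (t - s) := by
  have ht : 0 < t := lt_of_lt_of_le hδ hδt
  have key : ∀ r : ℝ, 0 ≤ r → r ≤ t → r * Ψ t ≤ t * Ψ r := by
    intro r hr hrt
    have e : (1 - r/t) • (0:ℝ) + (r/t) • t = r := by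
      simp only [smul_eq_mul, mul_zero, zero_add]; field_simp [ht.ne']
    have h1 := hconc.2 (Set.self_mem_Ici) (show t ∈ Set.Ici (0:ℝ) from ht.le)
      (show (0:ℝ) ≤ 1 - r/t by
        have : r/t ≤ 1 := div_le_one_of_le₀ hrt ht.le; linarith)
      (div_nonneg hr ht.le) (by ring)
    rw [e, smul_eq_mul, smul_eq_mul, hΨ0, mul_zero, zero_add, div_mul_eq_mul_div,
      div_le_iff₀ ht] at h1
    linarith
  have h1' := key s hs hst
  have h2' := key δ hδ.le hδt
  rw [div_mul_eq_mul_div, le_div_iff₀ hδ]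
  nlinarith [mul_le_mul_of_nonneg_right h2' (sub_nonneg.mpr hst),
    mul_le_mul_of_nonneg_left h1' hδ.le]

lemma point_pos {Ψ : ℝ → ℝ} (hconc : ConcaveOn ℝ (Set.Ici (0:ℝ)) Ψ)
    (hΨ0 : Ψ 0 = 0) (hmono : MonotoneOn Ψ (Set.Ici (0:ℝ)))
    {δ : ℝ} (hδ : 0 < δ) {a b : ℝ} (ha : 0 ≤ a) (hb : 0 ≤ b) :
    |Ψ a - Ψ b| ^ 2 ≤
      (Ψ δ / δ) ^ 2 * (a - b) ^ 2 + (if |b| < δ then (Ψ δ) ^ 2 else 0) := by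
  have hΨδ : 0 ≤ Ψ δ := by
    have := hmono Set.self_mem_Ici (show δ ∈ Set.Ici (0:ℝ) from hδ.le) hδ.le
    rwa [hΨ0] at this
  by_cases hbig : δ ≤ a ∨ δ ≤ b
  · have h : |Ψ a - Ψ b| ≤ (Ψ δ / δ) * |a - b| := by
      rcases le_total a b with hab | hab
      · have hδb : δ ≤ b := by rcases hbig with h | h; exacts [le_trans h hab, h]
        have hm := hmono (show a ∈ Set.Ici (0:ℝ) from ha) (show b ∈ Set.Ici (0:ℝ) from hb) hab
        rw [abs_sub_comm, abs_of_nonneg (by linarith), abs_sub_comm, abs_of_nonneg (by linarith)]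
        exact slope_aux hconc hΨ0 hδ ha hab hδb
      · have hδa : δ ≤ a := by rcases hbig with h | h; exacts [h, le_trans h hab]
        have hm := hmono (show b ∈ Set.Ici (0:ℝ) from hb) (show a ∈ Set.Ici (0:ℝ) from ha) hab
        rw [abs_of_nonneg (by linarith), abs_of_nonneg (by linarith)]
        exact slope_aux hconc hΨ0 hδ hb hab hδa
    have h2 : |Ψ a - Ψ b| ^ 2 ≤ ((Ψ δ / δ) * |a - b|) ^ 2 :=
      pow_le_pow_left₀ (abs_nonneg _) h 2
    have h3 : ((Ψ δ / δ) * |a - b|) ^ 2 = (Ψ δ / δ) ^ 2 * (a - b) ^ 2 := by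
      rw [mul_pow, sq_abs]
    have h4 : (0:ℝ) ≤ (if |b| < δ then (Ψ δ) ^ 2 else 0) := by positivity
    linarith
  · push_neg at hbig
    obtain ⟨ha', hb'⟩ := hbig
    have hbb : |b| < δ := by rwa [abs_of_nonneg hb]
    rw [if_pos hbb]
    have hΨa1 : 0 ≤ Ψ a := by
      have := hmono Set.self_mem_Ici (show a ∈ Set.Ici (0:ℝ) from ha) ha
      rwa [hΨ0] at this
    have hΨa2 : Ψ a ≤ Ψ δ := hmono (show a ∈ Set.Ici (0:ℝ) from ha)
      (show δ ∈ Set.Ici (0:ℝ) from hδ.le) ha'.le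
    have hΨb1 : 0 ≤ Ψ b := by
      have := hmono Set.self_mem_Ici (show b ∈ Set.Ici (0:ℝ) from hb) hb
      rwa [hΨ0] at this
    have hΨb2 : Ψ b ≤ Ψ δ := hmono (show b ∈ Set.Ici (0:ℝ) from hb)
      (show δ ∈ Set.Ici (0:ℝ) from hδ.le) hb'.le
    have h : |Ψ a - Ψ b| ≤ Ψ δ := by
      rw [abs_le]; constructor <;> linarith
    have h2 : |Ψ a - Ψ b| ^ 2 ≤ (Ψ δ) ^ 2 := by
      have := pow_le_pow_left₀ (abs_nonneg (Ψ a - Ψ b)) h 2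
      simpa using this
    nlinarith [sq_nonneg ((Ψ δ / δ) * (a - b))]

lemma point_all {Ψ : ℝ → ℝ} (hconc : ConcaveOn ℝ (Set.Ici (0:ℝ)) Ψ)
    (hΨ0 : Ψ 0 = 0) (hmono : MonotoneOn Ψ (Set.Ici (0:ℝ)))
    (hodd : ∀ r : ℝ, Ψ (-r) = -Ψ r)
    {δ : ℝ} (hδ : 0 < δ) {a b : ℝ} (hab : 0 ≤ a * b) :
    |Ψ a - Ψ b| ^ 2 ≤
      (Ψ δ / δ) ^ 2 * (a - b) ^ 2 + (if |b| < δ then (Ψ δ) ^ 2 else 0) := by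
  rcases mul_nonneg_iff.mp hab with ⟨ha, hb⟩ | ⟨ha, hb⟩
  · exact point_pos hconc hΨ0 hmono hδ ha hb
  · have := point_pos hconc hΨ0 hmono hδ (a := -a) (b := -b)
      (by linarith) (by linarith)
    rw [hodd, hodd] at this
    have e1 : |-Ψ a - -Ψ b| = |Ψ a - Ψ b| := by rw [← abs_neg]; ring_nf
    have e2 : (-a - -b) ^ 2 = (a - b) ^ 2 := by ring
    have e3 : |-b| = |b| := abs_neg b
    rw [e1, e2, e3] at this
    exact this

/-- Lemma 5.3 (splitting estimate for increments of the odd concave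
primitive Ψ against a probability measure). -/
theorem stmt_15 (μ : Measure ℝ) [IsProbabilityMeasure μ]
    (Ψ : ℝ → ℝ)
    (hΨ_C1 : ContDiff ℝ 1 Ψ)
    (hΨ_odd : ∀ r : ℝ, Ψ (-r) = -Ψ r)
    (hΨ_mono : StrictMonoOn Ψ (Set.Ici (0:ℝ)))
    (hΨ_concave : ConcaveOn ℝ (Set.Ici (0:ℝ)) Ψ)
    (δ : ℝ) (hδ : 0 < δ) (x : ℝ)
    (f g : ℝ → ℝ) (hf : Measurable f) (hg : Measurable g)
    (hsign : ∀ᵐ z ∂μ, 0 ≤ (f x - f z) * (g x - g z))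
    (hsmall : μ {z : ℝ | |g x - g z| < δ} ≤ ENNReal.ofReal δ)
    (hint : Integrable (fun z => |(f x - g x) - (f z - g z)| ^ 2) μ) :
    ∫ z, |Ψ (f x - f z) - Ψ (g x - g z)| ^ 2 ∂μ ≤
      (Ψ δ / δ) ^ 2 * ∫ z, |(f x - g x) - (f z - g z)| ^ 2 ∂μ + Ψ δ ^ 2 * δ := by
  have hΨ0 : Ψ 0 = 0 := by have := hΨ_odd 0; simp at this; linarith
  have hmono : MonotoneOn Ψ (Set.Ici (0:ℝ)) := hΨ_mono.monotoneOn
  set A : Set ℝ := {z : ℝ | |g x - g z| < δ} with hA_def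
  have hA : MeasurableSet A := by
    have : A = (fun z => |g x - g z|) ⁻¹' Set.Iio δ := rfl
    rw [this]
    exact ((measurable_const.sub hg).abs) measurableSet_Iio
  -- RHS integrable
  set F : ℝ → ℝ := fun z => (Ψ δ / δ) ^ 2 * |(f x - g x) - (f z - g z)| ^ 2
      + A.indicator (fun _ => (Ψ δ) ^ 2) z with hF_def
  have hFint : Integrable F μ :=
    (hint.const_mul _).add ((integrable_const ((Ψ δ) ^ 2)).indicator hA)
  -- pointwise bound a.e.
  have hptwise : ∀ᵐ z ∂μ, |Ψ (f x - f z) - Ψ (g x - g z)| ^ 2 ≤ F z := by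
    filter_upwards [hsign] with z hz
    have key := point_all hΨ_concave hΨ0 hmono hΨ_odd hδ hz
    have e : (f x - f z - (g x - g z)) ^ 2 = |(f x - g x) - (f z - g z)| ^ 2 := by
      rw [sq_abs]; ring
    have eind : A.indicator (fun _ => (Ψ δ) ^ 2) z
        = (if |g x - g z| < δ then (Ψ δ) ^ 2 else 0) := by
      by_cases h : |g x - g z| < δ
      · rw [if_pos h, Set.indicator_of_mem (show z ∈ A from h)]
      · rw [if_neg h, Set.indicator_of_notMem (show z ∉ A from h)]
    rw [hF_def]
    dsimp only
    rw [eind, ← e]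
    exact key
  -- LHS measurable and integrable
  have hmeas : AEStronglyMeasurable (fun z => |Ψ (f x - f z) - Ψ (g x - g z)| ^ 2) μ := by
    apply Measurable.aestronglyMeasurable
    have hΨm : Measurable Ψ := hΨ_C1.continuous.measurable
    exact (((hΨm.comp (measurable_const.sub hf)).sub
      (hΨm.comp (measurable_const.sub hg))).abs.pow measurable_const)
  have hLint : Integrable (fun z => |Ψ (f x - f z) - Ψ (g x - g z)| ^ 2) μ := by
    apply hFint.mono' hmeas
    filter_upwards [hptwise] with z hz
    rwa [Real.norm_eq_abs, abs_of_nonneg (by positivity)]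
  have hle : ∫ z, |Ψ (f x - f z) - Ψ (g x - g z)| ^ 2 ∂μ ≤ ∫ z, F z ∂μ :=
    integral_mono_ae hLint hFint hptwise
  have hsplit : ∫ z, F z ∂μ = (Ψ δ / δ) ^ 2 * ∫ z, |(f x - g x) - (f z - g z)| ^ 2 ∂μ
      + (Ψ δ) ^ 2 * (μ A).toReal := by
    rw [hF_def]
    rw [integral_add (hint.const_mul _) ((integrable_const ((Ψ δ) ^ 2)).indicator hA)]
    rw [integral_const_mul, integral_indicator_const _ hA, smul_eq_mul, mul_comm (Ψ δ ^ 2)]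
    rfl
  have hμA : (μ A).toReal ≤ δ := by
    have h1 : (μ A).toReal ≤ (ENNReal.ofReal δ).toReal :=
      ENNReal.toReal_mono ENNReal.ofReal_ne_top hsmall
    rwa [ENNReal.toReal_ofReal hδ.le] at h1
  have hfinal : (Ψ δ) ^ 2 * (μ A).toReal ≤ (Ψ δ) ^ 2 * δ :=
    mul_le_mul_of_nonneg_left hμA (sq_nonneg _)
  linarith
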